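/- Let f : ℝ → H be continuous with values in a normed space H, twice continuously differentiable, and let τ > 0, tₘ ∈ ℝ. Then ‖f(tₘ)‖ ≤ (1/(2τ))·∫_{tₘ-τ}^{tₘ+τ} ‖f(r)‖ dr + (τ/2)·∫_{tₘ-τ}^{tₘ+τ} ‖f''(r)‖ dr. -/

import Mathlib

/-!
Put `ψ t = f (a + t) + f (a - t) - 2 f a` and `M = ∫_{a-τ}^{a+τ} ‖f''‖`. Since `ψ 0 = 0` and
`ψ' t = f' (a + t) - f' (a - t)` has norm at most `M`, the mean value inequality gives
`‖ψ t‖ ≤ M t` on `[0, τ]`. The function `t ↦ ∫_{a-t}^{a+t} f - 2 t f a` vanishes at `0` and has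
derivative `ψ`, so the same inequality bounds its value at `τ` by `M τ²`; the triangle inequality
then gives `2 τ ‖f a‖ ≤ ∫ ‖f‖ + M τ²`. Only norms of `f` and `f''` occur, so one may pass to the
completion of `H` to have the fundamental theorem of calculus available.
-/

open Set MeasureTheory intervalIntegral

theorem LinearIsometry.norm_iteratedDeriv_comp_left {𝕜 E F : Type*} [NontriviallyNormedField 𝕜]
    [NormedAddCommGroup E] [NormedSpace 𝕜 E] [NormedAddCommGroup F] [NormedSpace 𝕜 F]
    {f : 𝕜 → E} {x : 𝕜} {n : WithTop ℕ∞} {i : ℕ} (g : E →ₗᵢ[𝕜] F) (hf : ContDiffAt 𝕜 n f x)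
    (hi : i ≤ n) : ‖iteratedDeriv i (g ∘ f) x‖ = ‖iteratedDeriv i f x‖ := by
  rw [← norm_iteratedFDeriv_eq_norm_iteratedDeriv, ← norm_iteratedFDeriv_eq_norm_iteratedDeriv,
    g.norm_iteratedFDeriv_comp_left hf hi]

section

variable {E : Type*} [NormedAddCommGroup E] [NormedSpace ℝ E]

theorem hasDerivAt_comp_const_add_add_comp_const_sub {g g' : ℝ → E}
    (hg : ∀ x, HasDerivAt g (g' x) x) (a t : ℝ) :
    HasDerivAt (fun s ↦ g (a + s) + g (a - s)) (g' (a + t) - g' (a - t)) t := by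
  have h₁ := (hg (a + t)).comp_const_add a t
  have h₂ := (hg (a - t)).comp_const_sub a t
  simpa [sub_eq_add_neg] using h₁.fun_add h₂

theorem hasDerivAt_comp_const_add_sub_comp_const_sub {g g' : ℝ → E}
    (hg : ∀ x, HasDerivAt g (g' x) x) (a t : ℝ) :
    HasDerivAt (fun s ↦ g (a + s) - g (a - s)) (g' (a + t) + g' (a - t)) t := by
  have h₁ := (hg (a + t)).comp_const_add a t
  have h₂ := (hg (a - t)).comp_const_sub a t
  simpa using h₁.fun_sub h₂

theorem norm_le_mul_of_hasDerivAt_of_eq_zero {φ φ' : ℝ → E} {C τ t : ℝ}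
    (hφ : ∀ s, HasDerivAt φ (φ' s) s) (h₀ : φ 0 = 0) (hC : ∀ s ∈ Ico 0 τ, ‖φ' s‖ ≤ C)
    (ht : t ∈ Icc 0 τ) : ‖φ t‖ ≤ C * t := by
  simpa [h₀] using
    norm_image_sub_le_of_norm_deriv_le_segment' (fun s _ ↦ (hφ s).hasDerivWithinAt) hC t ht

variable [CompleteSpace E]

theorem norm_sub_le_integral_norm_deriv {g : ℝ → E} (hg : ContDiff ℝ 1 g) {a b c d : ℝ}
    (hac : a ≤ c) (hcd : c ≤ d) (hdb : d ≤ b) : ‖g d - g c‖ ≤ ∫ x in a..b, ‖deriv g x‖ := by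
  have hg' : Continuous (deriv g) := hg.continuous_deriv le_rfl
  calc ‖g d - g c‖ = ‖∫ x in c..d, deriv g x‖ := by
        rw [integral_deriv_eq_sub (fun x _ ↦ hg.differentiable one_ne_zero x)
          (hg'.intervalIntegrable c d)]
    _ ≤ ∫ x in c..d, ‖deriv g x‖ := norm_integral_le_integral_norm hcd
    _ ≤ ∫ x in a..b, ‖deriv g x‖ :=
        integral_mono_interval hac hcd hdb (.of_forall fun _ ↦ norm_nonneg _)
          (hg'.norm.intervalIntegrable a b)

theorem norm_comp_const_add_add_comp_const_sub_sub_two_smul_le {f : ℝ → E} (hf : ContDiff ℝ 2 f)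
    {a τ t : ℝ} (ht : t ∈ Icc 0 τ) :
    ‖f (a + t) + f (a - t) - (2 : ℝ) • f a‖
      ≤ (∫ r in (a - τ)..(a + τ), ‖iteratedDeriv 2 f r‖) * t := by
  have hf' : ContDiff ℝ 1 (deriv f) := hf.iterate_deriv' 1 1
  refine norm_le_mul_of_hasDerivAt_of_eq_zero (φ := fun s ↦ f (a + s) + f (a - s) - (2 : ℝ) • f a)
    (fun s ↦ (hasDerivAt_comp_const_add_add_comp_const_sub
      (fun x ↦ (hf.differentiable (by norm_num) x).hasDerivAt) a s).sub_const _)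
    (by simp [two_smul]) (fun s hs ↦ ?_) ht
  rw [iteratedDeriv_succ, iteratedDeriv_one]
  exact norm_sub_le_integral_norm_deriv hf' (by linarith [hs.2]) (by linarith [hs.1])
    (by linarith [hs.2])

theorem norm_integral_sub_smul_le {f : ℝ → E} (hf : ContDiff ℝ 2 f) {a τ : ℝ} (hτ : 0 ≤ τ) :
    ‖(∫ r in (a - τ)..(a + τ), f r) - (2 * τ) • f a‖
      ≤ (∫ r in (a - τ)..(a + τ), ‖iteratedDeriv 2 f r‖) * τ * τ := by
  set M := ∫ r in (a - τ)..(a + τ), ‖iteratedDeriv 2 f r‖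
  have hM : 0 ≤ M := integral_nonneg (by linarith) fun _ _ ↦ norm_nonneg _
  have hF : ∀ x, HasDerivAt (fun u ↦ ∫ r in a..u, f r) (f x) x :=
    fun x ↦ (hf.continuous.integral_hasStrictDerivAt a x).hasDerivAt
  have hφ : ∀ t, HasDerivAt
      (fun s ↦ ((∫ r in a..(a + s), f r) - ∫ r in a..(a - s), f r) - (2 * s) • f a)
      (f (a + t) + f (a - t) - (2 : ℝ) • f a) t := fun t ↦ by
    simpa using (hasDerivAt_comp_const_add_sub_comp_const_sub hF a t).fun_sub
      (((hasDerivAt_id t).const_mul 2).smul_const (f a))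
  have := norm_le_mul_of_hasDerivAt_of_eq_zero hφ (by simp) (C := M * τ)
    (fun s hs ↦ (norm_comp_const_add_add_comp_const_sub_sub_two_smul_le hf
      (Ico_subset_Icc_self hs)).trans (by gcongr; exact hs.2.le)) ⟨hτ, le_rfl⟩
  rwa [integral_interval_sub_left (hf.continuous.intervalIntegrable _ _)
    (hf.continuous.intervalIntegrable _ _)] at this

theorem two_mul_norm_le_integral_norm_add {f : ℝ → E} (hf : ContDiff ℝ 2 f) {τ : ℝ} (hτ : 0 ≤ τ)
    (a : ℝ) :
    2 * τ * ‖f a‖ ≤ (∫ r in (a - τ)..(a + τ), ‖f r‖)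
      + (∫ r in (a - τ)..(a + τ), ‖iteratedDeriv 2 f r‖) * τ * τ := by
  calc 2 * τ * ‖f a‖ = ‖(2 * τ) • f a‖ := by
        rw [norm_smul, Real.norm_of_nonneg (by positivity)]
    _ ≤ ‖∫ r in (a - τ)..(a + τ), f r‖ + ‖(∫ r in (a - τ)..(a + τ), f r) - (2 * τ) • f a‖ :=
        norm_le_norm_add_norm_sub _ _
    _ ≤ _ := add_le_add (norm_integral_le_integral_norm (by linarith))
        (norm_integral_sub_smul_le hf hτ)

end

theorem midpoint_value_average_bound_general
    {H : Type*} [NormedAddCommGroup H] [NormedSpace ℝ H]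
    (f : ℝ → H) (hf : ContDiff ℝ 2 f)
    (τ tm : ℝ) (hτ : 0 < τ) :
    ‖f tm‖ ≤ (1 / (2 * τ)) * ∫ r in (tm - τ)..(tm + τ), ‖f r‖
        + (τ / 2) * ∫ r in (tm - τ)..(tm + τ), ‖iteratedDeriv 2 f r‖ := by
  let ι : H →ₗᵢ[ℝ] UniformSpace.Completion H := UniformSpace.Completion.toComplₗᵢ
  have key := two_mul_norm_le_integral_norm_add (ι.contDiff.comp hf) hτ.le tm
  have hι : ∀ r, ‖iteratedDeriv 2 (ι ∘ f) r‖ = ‖iteratedDeriv 2 f r‖ :=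
    fun r ↦ ι.norm_iteratedDeriv_comp_left hf.contDiffAt le_rfl
  simp only [hι, Function.comp_apply, LinearIsometry.norm_map] at key
  -- the first `∫` of the statement extends to the end, so its integrand is `‖f r‖ + τ / 2 * ∫ …`
  rw [integral_add (hf.continuous.norm.intervalIntegrable _ _) intervalIntegrable_const,
    intervalIntegral.integral_const, smul_eq_mul]
  field_simp
  nlinarith

/-- Averaging estimate: the value at the midpoint is controlled by the
integral averages of `‖f‖` and `‖f''‖` over `[tₘ-τ, tₘ+τ]`. -/
theorem midpoint_value_average_bound
    {H : Type*} [NormedAddCommGroup H] [NormedSpace ℝ H] [CompleteSpace H]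
    (f : ℝ → H) (hf : ContDiff ℝ 2 f)
    (τ tm : ℝ) (hτ : 0 < τ) :
    ‖f tm‖ ≤ (1 / (2 * τ)) * ∫ r in (tm - τ)..(tm + τ), ‖f r‖
        + (τ / 2) * ∫ r in (tm - τ)..(tm + τ), ‖iteratedDeriv 2 f r‖ :=
  midpoint_value_average_bound_general f hf τ tm hτ
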